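/- Let $A$ and $B$ be real random variables on a probability space, and let $a$ be a real number. For any $t \in \mathbb{R}$ and any $s \in [0,1]$, the quantity $I(s,t) := \mathbb{E}\big[(A + aB)^2 e^{i s t (A+aB)}\big] - \mathbb{E}\big[(A+aB)^2\big]$ (assuming $A, B \in L^2$) satisfies $|I(s,t)| \le 4 a^2 \mathbb{E}(B^2) + 8 \mathbb{E}(A^2)|t| h + 4 h^{2-p}\mathbb{E}(|A|^p)$ for every $h>0$ and $p > 2$ with $A \in L^p$. -/

import Mathlib

open MeasureTheory ProbabilityTheory
open scoped ENNReal

section Aux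
open Real

lemma norm_exp_I_mul_sub_one_le (u : ℝ) :
    ‖Complex.exp (Complex.I * u) - 1‖ ≤ |u| := by
  have hre : (Complex.exp (Complex.I * u) - 1).re = Real.cos u - 1 := by
    rw [mul_comm]
    simp [Complex.exp_ofReal_mul_I_re]
  have him : (Complex.exp (Complex.I * u) - 1).im = Real.sin u := by
    rw [mul_comm]
    simp [Complex.exp_ofReal_mul_I_im]
  have hsq : ‖Complex.exp (Complex.I * u) - 1‖ ^ 2 = 2 - 2 * Real.cos u := by
    rw [Complex.sq_norm, Complex.normSq_apply, hre, him]
    nlinarith [Real.sin_sq_add_cos_sq u]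
  have hc : 1 - u ^ 2 / 2 ≤ Real.cos u := Real.one_sub_sq_div_two_le_cos
  have h2 : ‖Complex.exp (Complex.I * u) - 1‖ ^ 2 ≤ |u| ^ 2 := by
    rw [hsq, sq_abs]; nlinarith
  nlinarith [norm_nonneg (Complex.exp (Complex.I * u) - 1), abs_nonneg u]

lemma key_pointwise (h T p : ℝ) (hh : 0 < h) (hT : 0 ≤ T) (hp : 2 < p)
    (α β : ℝ) (hα : 0 ≤ α) (hβ : 0 ≤ β) :
    (α + β) ^ 2 * min 2 (T * (α + β)) ≤
      4 * β ^ 2 + 8 * α ^ 2 * (T * h) + 4 * h ^ (2 - p) * α ^ p := by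
  have hM : 0 ≤ 4 * h ^ (2 - p) * α ^ p := by positivity
  have hTh : 0 ≤ T * h := mul_nonneg hT hh.le
  have hmin2 : (α + β) ^ 2 * min 2 (T * (α + β)) ≤ (α + β) ^ 2 * 2 :=
    mul_le_mul_of_nonneg_left (min_le_left _ _) (sq_nonneg _)
  have hminT : (α + β) ^ 2 * min 2 (T * (α + β)) ≤ T * (α + β) ^ 3 := by
    have := mul_le_mul_of_nonneg_left (min_le_right 2 (T * (α + β))) (sq_nonneg (α + β))
    nlinarith [this]
  rcases le_or_gt h α with hcase | hcase
  · -- α ≥ h : Markov term dominates 4α²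
    have hαpos : 0 < α := lt_of_lt_of_le hh hcase
    have h1 : α ^ 2 ≤ h ^ (2 - p) * α ^ p := by
      have e1 : h ^ (p - 2) ≤ α ^ (p - 2) := Real.rpow_le_rpow hh.le hcase (by linarith)
      have e2 : α ^ p = α ^ (p - 2) * α ^ 2 := by
        rw [← Real.rpow_natCast α 2, ← Real.rpow_add hαpos]
        norm_num
      have e3 : h ^ (2 - p) * h ^ (p - 2) = 1 := by
        rw [← Real.rpow_add hh]; norm_num
      have e4 : 0 ≤ h ^ (2 - p) := Real.rpow_nonneg hh.le _
      calc α ^ 2 = (h ^ (2 - p) * h ^ (p - 2)) * α ^ 2 := by rw [e3]; ring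
        _ ≤ (h ^ (2 - p) * α ^ (p - 2)) * α ^ 2 := by
            apply mul_le_mul_of_nonneg_right _ (sq_nonneg α)
            exact mul_le_mul_of_nonneg_left e1 e4
        _ = h ^ (2 - p) * α ^ p := by rw [e2]; ring
    nlinarith [sq_nonneg (α - β), mul_nonneg (mul_nonneg (by norm_num : (0:ℝ) ≤ 8) (sq_nonneg α)) hTh]
  · rcases le_or_gt 1 (2 * (T * h)) with hcase2 | hcase2
    · -- Th ≥ 1/2 : 8α²Th ≥ 4α²
      nlinarith [sq_nonneg (α - β), mul_nonneg (sq_nonneg α) hTh]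
    · rcases le_or_gt β h with hcase3 | hcase3
      · -- α < h, β ≤ h, 2Th < 1
        have e1 : 0 ≤ T * (α + β) ^ 2 * (2 * h - (α + β)) :=
          mul_nonneg (mul_nonneg hT (sq_nonneg _)) (by linarith)
        have e2 : 0 ≤ (T * h) * (α - β) ^ 2 := mul_nonneg hTh (sq_nonneg _)
        have e3 : 0 ≤ β ^ 2 * (1 - 2 * (T * h)) := mul_nonneg (sq_nonneg β) (by linarith)
        nlinarith [hminT]
      · rcases le_or_gt β (3 * h) with hcase4 | hcase4
        · -- h < β ≤ 3h, 2Th < 1 : cubic bound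
          have cube : (h + β) ^ 3 ≤ 8 * h * β ^ 2 := by
            have inner : (0:ℝ) ≤ -β ^ 2 + 4 * h * β + h ^ 2 := by nlinarith
            nlinarith [mul_nonneg (by linarith : (0:ℝ) ≤ β - h) inner]
          have w1 : (α + β) ^ 3 ≤ (h + β) ^ 3 := by
            apply pow_le_pow_left₀ (by positivity) (by linarith)
          have w2 : T * (α + β) ^ 3 ≤ T * (h + β) ^ 3 := mul_le_mul_of_nonneg_left w1 hT
          have w3 : 2 * h * (T * (h + β) ^ 3) ≤ (h + β) ^ 3 := by
            nlinarith [pow_nonneg (by positivity : (0:ℝ) ≤ h + β) 3]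
          have w4 : 2 * h * (T * (α + β) ^ 3) ≤ 8 * h * β ^ 2 := by
            calc 2 * h * (T * (α + β) ^ 3) ≤ 2 * h * (T * (h + β) ^ 3) := by nlinarith
              _ ≤ (h + β) ^ 3 := w3
              _ ≤ 8 * h * β ^ 2 := cube
          have w5 : T * (α + β) ^ 3 ≤ 4 * β ^ 2 := by
            have := (mul_le_mul_iff_right₀ (by linarith : (0:ℝ) < 2 * h)).mp (by linarith [w4] : 2 * h * (T * (α + β) ^ 3) ≤ 2 * h * (4 * β ^ 2))
            linarith
          nlinarith [hminT, mul_nonneg (sq_nonneg α) hTh]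
        · -- β > 3h > 3α
          nlinarith [hmin2, mul_nonneg (by linarith : (0:ℝ) ≤ β - 3 * α) (by linarith : (0:ℝ) ≤ 7 * β + 3 * α), mul_nonneg (sq_nonneg α) hTh]

end Aux

theorem taylor_remainder_bound {Ω : Type*} [MeasureSpace Ω]
    [IsProbabilityMeasure (ℙ : Measure Ω)]
    (A B : Ω → ℝ) (hA : Measurable A) (hB : Measurable B)
    (a : ℝ) (p : ℝ) (hp : 2 < p)
    (hAp : MemLp A (ENNReal.ofReal p) ℙ) (hB2 : MemLp B 2 ℙ)
    (t s : ℝ) (hs : s ∈ Set.Icc (0 : ℝ) 1) (h : ℝ) (hh : 0 < h) :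
    ‖(∫ ω, (((A ω + a * B ω : ℝ) : ℂ) ^ 2 *
          Complex.exp (Complex.I * ((s * t * (A ω + a * B ω) : ℝ) : ℂ))) ∂ℙ) -
        Complex.ofReal (∫ ω, (A ω + a * B ω) ^ 2 ∂ℙ)‖ ≤
      4 * a ^ 2 * (∫ ω, (B ω) ^ 2 ∂ℙ : ℝ) + 8 * (∫ ω, (A ω) ^ 2 ∂ℙ : ℝ) * |t| * h +
        4 * h ^ (2 - p) * ∫ ω, |A ω| ^ p ∂ℙ := by
  set X : Ω → ℝ := fun ω => A ω + a * B ω with hX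
  have hXm : Measurable X := hA.add (measurable_const.mul hB)
  have h2le : (2 : ℝ≥0∞) ≤ ENNReal.ofReal p := by
    rw [show (2 : ℝ≥0∞) = ENNReal.ofReal 2 by norm_num]
    exact ENNReal.ofReal_le_ofReal (by linarith)
  have hA2 : MemLp A 2 ℙ := hAp.mono_exponent h2le
  have hX2 : MemLp X 2 ℙ := hA2.add (hB2.const_mul a)
  have iX2 : Integrable (fun ω => X ω ^ 2) ℙ := hX2.integrable_sq
  have iB2 : Integrable (fun ω => B ω ^ 2) ℙ := hB2.integrable_sq
  have iA2 : Integrable (fun ω => A ω ^ 2) ℙ := hA2.integrable_sq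
  have iAp : Integrable (fun ω => |A ω| ^ p) ℙ := by
    have hpne : ENNReal.ofReal p ≠ 0 := by
      simp [ENNReal.ofReal_eq_zero]; linarith
    have := hAp.integrable_norm_rpow hpne ENNReal.ofReal_ne_top
    simpa [ENNReal.toReal_ofReal (by linarith : (0:ℝ) ≤ p), Real.norm_eq_abs] using this
  -- the complex integrand
  set g : Ω → ℂ := fun ω => ((X ω : ℝ) : ℂ) ^ 2 *
      Complex.exp (Complex.I * ((s * t * X ω : ℝ) : ℂ)) with hg
  have hnormg : ∀ ω, ‖g ω‖ = X ω ^ 2 := by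
    intro ω
    rw [hg]
    simp only [norm_mul, norm_pow, Complex.norm_real, Real.norm_eq_abs]
    rw [Complex.norm_exp]
    simp [sq_abs]
  have ig : Integrable g ℙ := by
    refine Integrable.mono' iX2 ?_ (Filter.Eventually.of_forall fun ω => le_of_eq (hnormg ω))
    exact (((Complex.measurable_ofReal.comp hXm).pow_const 2).mul
      (Complex.measurable_exp.comp
        ((Complex.measurable_ofReal.comp (measurable_const.mul hXm)).const_mul Complex.I))).aestronglyMeasurable
  have iX2c : Integrable (fun ω => ((X ω ^ 2 : ℝ) : ℂ)) ℙ := iX2.ofReal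
  have hre : Complex.ofReal (∫ ω, X ω ^ 2 ∂ℙ) = ∫ ω, ((X ω ^ 2 : ℝ) : ℂ) ∂ℙ :=
    (integral_ofReal).symm
  rw [show (∫ ω, (((A ω + a * B ω : ℝ) : ℂ) ^ 2 *
          Complex.exp (Complex.I * ((s * t * (A ω + a * B ω) : ℝ) : ℂ))) ∂ℙ) = ∫ ω, g ω ∂ℙ from rfl,
      show (∫ ω, (A ω + a * B ω) ^ 2 ∂ℙ) = ∫ ω, X ω ^ 2 ∂ℙ from rfl, hre,
      ← integral_sub ig iX2c]
  -- bound function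
  set F : Ω → ℝ := fun ω => 4 * a ^ 2 * B ω ^ 2 + 8 * |t| * h * A ω ^ 2
      + 4 * h ^ (2 - p) * |A ω| ^ p with hF
  have iF1 : Integrable (fun ω => 4 * a ^ 2 * B ω ^ 2) ℙ := iB2.const_mul _
  have iF2 : Integrable (fun ω => 8 * |t| * h * A ω ^ 2) ℙ := iA2.const_mul _
  have iF3 : Integrable (fun ω => 4 * h ^ (2 - p) * |A ω| ^ p) ℙ := iAp.const_mul _
  have i12 : Integrable (fun ω => 4 * a ^ 2 * B ω ^ 2 + 8 * |t| * h * A ω ^ 2) ℙ := iF1.add iF2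
  have iF : Integrable F ℙ := i12.add iF3
  have hbound : ∀ ω, ‖g ω - ((X ω ^ 2 : ℝ) : ℂ)‖ ≤ F ω := by
    intro ω
    have hfac : g ω - ((X ω ^ 2 : ℝ) : ℂ) =
        ((X ω ^ 2 : ℝ) : ℂ) * (Complex.exp (Complex.I * ((s * t * X ω : ℝ) : ℂ)) - 1) := by
      rw [hg]; push_cast; ring
    rw [hfac, norm_mul, Complex.norm_real, Real.norm_eq_abs, abs_of_nonneg (sq_nonneg _)]
    set α := |A ω| with hα
    set β := |a * B ω| with hβ
    have hXle : |X ω| ≤ α + β := abs_add_le _ _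
    have hXsq : X ω ^ 2 ≤ (α + β) ^ 2 := by
      rw [← sq_abs (X ω)]
      exact pow_le_pow_left₀ (abs_nonneg _) hXle 2
    have hnexp : ‖Complex.exp (Complex.I * ((s * t * X ω : ℝ) : ℂ)) - 1‖ ≤
        min 2 (|t| * (α + β)) := by
      apply le_min
      · calc ‖Complex.exp (Complex.I * ((s * t * X ω : ℝ) : ℂ)) - 1‖
            ≤ ‖Complex.exp (Complex.I * ((s * t * X ω : ℝ) : ℂ))‖ + ‖(1 : ℂ)‖ := norm_sub_le _ _
          _ = 2 := by
              rw [Complex.norm_exp]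
              simp
              norm_num
      · calc ‖Complex.exp (Complex.I * ((s * t * X ω : ℝ) : ℂ)) - 1‖
            ≤ |s * t * X ω| := norm_exp_I_mul_sub_one_le _
          _ = |s| * |t| * |X ω| := by rw [abs_mul, abs_mul]
          _ ≤ 1 * |t| * (α + β) := by
              have hs1 : |s| ≤ 1 := by rw [abs_of_nonneg hs.1]; exact hs.2
              exact mul_le_mul (mul_le_mul_of_nonneg_right hs1 (abs_nonneg t)) hXle
                (abs_nonneg _) (by positivity)
          _ = |t| * (α + β) := by ring
    have step1 : X ω ^ 2 * ‖Complex.exp (Complex.I * ((s * t * X ω : ℝ) : ℂ)) - 1‖ ≤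
        (α + β) ^ 2 * min 2 (|t| * (α + β)) :=
      mul_le_mul hXsq hnexp (norm_nonneg _) (by positivity)
    have step2 := key_pointwise h |t| p hh (abs_nonneg t) hp α β (abs_nonneg _) (abs_nonneg _)
    have hβ2 : β ^ 2 = a ^ 2 * B ω ^ 2 := by rw [hβ, sq_abs, mul_pow]
    have hα2 : α ^ 2 = A ω ^ 2 := sq_abs _
    rw [hF]
    calc X ω ^ 2 * ‖Complex.exp (Complex.I * ((s * t * X ω : ℝ) : ℂ)) - 1‖
        ≤ 4 * β ^ 2 + 8 * α ^ 2 * (|t| * h) + 4 * h ^ (2 - p) * α ^ p :=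
          le_trans step1 step2
      _ = 4 * a ^ 2 * B ω ^ 2 + 8 * |t| * h * A ω ^ 2 + 4 * h ^ (2 - p) * |A ω| ^ p := by
          rw [hβ2, hα2]; ring
  calc ‖∫ ω, (g ω - ((X ω ^ 2 : ℝ) : ℂ)) ∂ℙ‖ ≤ ∫ ω, F ω ∂ℙ :=
        norm_integral_le_of_norm_le iF (Filter.Eventually.of_forall hbound)
    _ = 4 * a ^ 2 * (∫ ω, B ω ^ 2 ∂ℙ) + 8 * |t| * h * (∫ ω, A ω ^ 2 ∂ℙ)
        + 4 * h ^ (2 - p) * ∫ ω, |A ω| ^ p ∂ℙ := by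
        simp only [hF]
        rw [integral_add i12 iF3, integral_add iF1 iF2,
          integral_const_mul, integral_const_mul, integral_const_mul]
    _ = _ := by ring
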